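/- arXiv:1007.1032 — 4 statements merged into one kernel-verified Lean document; each statement's English description precedes it below -/
import Mathlib

section
/- Contaminated data quantile approximation: let x be a vector of length n with left p-quantile y' = lq_x(p), p in [0,1], and let w be obtained from x by removing n* < n of its entries. If y' is among the remaining entries of w (which holds in the setting where the removed entries are the contaminated ones and y' = lq_x(p) lies in w), then there exists p' with |p' - p| <= n*/(n - n*) such that y' = lq_w(p'). -/
/-- The left `p`-quantile of a data vector `v` of length `N > 0`: the `⌈Np⌉`-th
smallest entry of `v` (for `p ∈ (0,1]`; for `p = 0` it is the smallest entry). -/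
noncomputable def lqv {N : ℕ} (hN : 0 < N) (v : Fin N → ℝ) (p : ℝ) : ℝ :=
  (v ∘ Tuple.sort v) ⟨min (N - 1) (max 1 ⌈(N : ℝ) * p⌉₊ - 1), by omega⟩

open scoped Classical in
/-- The degree of separation of `a` and `b` with respect to the data vector `v`:
the fraction of entries of `v` lying strictly between `a` and `b`. -/
noncomputable def dosv {N : ℕ} (v : Fin N → ℝ) (a b : ℝ) : ℝ :=
  ((Finset.univ.filter fun i => min a b < v i ∧ v i < max a b).card : ℝ) / N

/-! Write `a_v` and `b_v` for the numbers of entries of `v` that are `< y` and `≤ y`. An entry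
`y` of `v` is the `q`-quantile of `v` exactly when `N q ∈ (a_v, b_v]` (or `a_v = 0` and
`N q ≤ b_v`). Deleting `d` of the `n` entries of `x` can only lower `a`, and lowers `b` by at
most `d`, so for the remaining `m` entries the window `(a_w, b_w]` of `y` contains
`m p' := min b_w (m p + d)`, which is within `d` of `m p`. -/

open Finset

lemma card_filter_comp_perm {ι : Type*} [Fintype ι] (σ : Equiv.Perm ι) (P : ι → Prop)
    [DecidablePred P] : #{i | P (σ i)} = #{i | P i} :=
  card_equiv σ (by simp)

section SortedRank

variable {α : Type*} [LinearOrder α] {N : ℕ}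

lemma Monotone.card_filter_lt_le_iff {s : Fin N → α} (hs : Monotone s) (y : α) (j : Fin N) :
    #{i | s i < y} ≤ j ↔ y ≤ s j := by
  constructor
  · intro h
    by_contra! hj
    have hsub : Iic j ⊆ ({i | s i < y} : Finset (Fin N)) := fun i hi => by
      simp only [mem_Iic, mem_filter_univ] at hi ⊢
      exact (hs hi).trans_lt hj
    have := card_le_card hsub
    rw [Fin.card_Iic] at this
    omega
  · intro h
    calc #{i | s i < y} ≤ #(Iio j) := card_le_card fun i hi => by
          simp only [mem_Iio, mem_filter_univ] at hi ⊢
          by_contra! hji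
          exact (hi.trans_le h).not_ge (hs hji)
      _ = j := Fin.card_Iio j

lemma Monotone.lt_card_filter_le_iff {s : Fin N → α} (hs : Monotone s) (y : α) (j : Fin N) :
    j < #{i | s i ≤ y} ↔ s j ≤ y := by
  constructor
  · intro h
    by_contra! hj
    have hsub : ({i | s i ≤ y} : Finset (Fin N)) ⊆ Iio j := fun i hi => by
      simp only [mem_Iio, mem_filter_univ] at hi ⊢
      by_contra! hji
      exact (hi.trans_lt hj).not_ge (hs hji)
    have := card_le_card hsub
    rw [Fin.card_Iio] at this
    omega
  · intro h
    calc (j : ℕ) < #(Iic j) := by rw [Fin.card_Iic]; omega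
      _ ≤ #{i | s i ≤ y} := card_le_card fun i hi => by
          simp only [mem_Iic, mem_filter_univ] at hi ⊢
          exact (hs hi).trans h

lemma Monotone.apply_eq_iff_card_filter {s : Fin N → α} (hs : Monotone s) (y : α) (j : Fin N) :
    s j = y ↔ #{i | s i < y} ≤ j ∧ j < #{i | s i ≤ y} := by
  rw [hs.card_filter_lt_le_iff, hs.lt_card_filter_le_iff, le_antisymm_iff, and_comm]

lemma Tuple.apply_sort_eq_iff_card_filter (v : Fin N → α) (y : α) (j : Fin N) :
    v (Tuple.sort v j) = y ↔ #{i | v i < y} ≤ j ∧ j < #{i | v i ≤ y} := by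
  rw [← Function.comp_apply (f := v), (Tuple.monotone_sort v).apply_eq_iff_card_filter]
  simp only [Function.comp_apply, card_filter_comp_perm (Tuple.sort v) (v · < y),
    card_filter_comp_perm (Tuple.sort v) (v · ≤ y)]

lemma card_filter_lt_lt_card_filter_le {ι : Type*} [Fintype ι] {v : ι → α} {y : α}
    (hy : y ∈ Set.range v) : #{i | v i < y} < #{i | v i ≤ y} := by
  obtain ⟨i, rfl⟩ := hy
  refine card_lt_card ⟨monotone_filter_right _ fun _ _ => le_of_lt, fun h => ?_⟩
  simpa using h (mem_filter_univ _ |>.2 le_rfl)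

end SortedRank

section Restriction

variable {ι κ : Type*} [Fintype ι] [Fintype κ] (e : ι ↪ κ) (P : κ → Prop) [DecidablePred P]

lemma card_filter_comp_embedding_le : #{i | P (e i)} ≤ #{k | P k} :=
  card_le_card_of_injOn e (fun i hi => by simpa using hi) e.injective.injOn

lemma card_filter_le_card_filter_comp_embedding_add :
    #{k | P k} ≤ #{i | P (e i)} + (Fintype.card κ - Fintype.card ι) := by
  classical
  have hsub : ({k | P k} : Finset κ) ⊆ ({i | P (e i)} : Finset ι).map e ∪ (univ.map e)ᶜ :=
    fun k hk => by
      by_cases he : k ∈ univ.map e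
      · obtain ⟨i, -, rfl⟩ := mem_map.1 he
        exact mem_union_left _ (mem_map_of_mem e (by simpa using hk))
      · exact mem_union_right _ (mem_compl.2 he)
  calc #{k | P k} ≤ _ := card_le_card hsub
    _ ≤ _ := card_union_le _ _
    _ = _ := by rw [card_map, card_compl, card_map, card_univ]

end Restriction

lemma lqv_eq_iff {N : ℕ} (hN : 0 < N) (v : Fin N → ℝ) {q y : ℝ} (hq : q ≤ 1)
    (hy : y ∈ Set.range v) :
    lqv hN v q = y ↔
      (#{i | v i < y} = 0 ∨ (#{i | v i < y} : ℝ) < N * q) ∧ N * q ≤ #{i | v i ≤ y} := by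
  have hab := card_filter_lt_lt_card_filter_le hy
  have hbN : #{i | v i ≤ y} ≤ N := (card_filter_le _ _).trans_eq (card_fin N)
  have hc : ⌈(N : ℝ) * q⌉₊ ≤ N :=
    Nat.ceil_le.2 (mul_le_of_le_one_right (Nat.cast_nonneg N) hq)
  rw [lqv, Function.comp_apply, Tuple.apply_sort_eq_iff_card_filter, ← Nat.lt_ceil,
    ← Nat.ceil_le]
  dsimp only
  omega

lemma exists_level_near_of_counts {a b a' b' m d : ℕ} {p : ℝ} (hp : p ∈ Set.Icc (0 : ℝ) 1)
    (hm : 0 < m) (hb'm : b' ≤ m) (haa' : a' ≤ a) (hbb' : b ≤ b' + d) (hab' : a' < b')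
    (ha : a = 0 ∨ (a : ℝ) < (m + d) * p) (hb : (m + d) * p ≤ b) :
    ∃ p' : ℝ, |p' - p| ≤ d / m ∧ p' ≤ 1 ∧ (a' = 0 ∨ (a' : ℝ) < m * p') ∧ m * p' ≤ b' := by
  obtain ⟨hp0, hp1⟩ := hp
  have hm' : (0 : ℝ) < m := Nat.cast_pos.2 hm
  have hd : (0 : ℝ) ≤ d := Nat.cast_nonneg d
  have hbb'ℝ : (b : ℝ) ≤ b' + d := by exact_mod_cast hbb'
  set t : ℝ := min (b' : ℝ) (m * p + d)
  have ht_le_b' : t ≤ b' := min_le_left _ _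
  have hmt : m * (t / m) = t := mul_div_cancel₀ t hm'.ne'
  refine ⟨t / m, ?_, ?_, ?_, by rwa [hmt]⟩
  · have hsub : t / m - p = (t - m * p) / m := by field_simp
    rw [hsub, abs_div, abs_of_pos hm', div_le_div_iff_of_pos_right hm', abs_le]
    have : m * p - d ≤ t := le_min (by nlinarith) (by linarith)
    constructor <;> linarith [min_le_right (b' : ℝ) (m * p + d)]
  · rw [div_le_one hm']
    exact ht_le_b'.trans (by exact_mod_cast hb'm)
  · rcases ha with ha | ha
    · exact Or.inl (by omega)
    rw [hmt]
    refine Or.inr (lt_min (by exact_mod_cast hab') ?_)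
    have : (a' : ℝ) ≤ a := by exact_mod_cast haa'
    nlinarith

theorem exists_lqv_comp_embedding_eq {n m : ℕ} (hn : 0 < n) (hm : 0 < m) (x : Fin n → ℝ)
    (e : Fin m ↪ Fin n) {p : ℝ} (hp : p ∈ Set.Icc (0 : ℝ) 1)
    (hmem : lqv hn x p ∈ Set.range (x ∘ e)) :
    ∃ p' : ℝ, |p' - p| ≤ ((n - m : ℕ) : ℝ) / m ∧ lqv hn x p = lqv hm (x ∘ e) p' := by
  set y := lqv hn x p
  obtain ⟨d, rfl⟩ := Nat.exists_eq_add_of_le (by simpa using Fintype.card_le_of_embedding e)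
  obtain ⟨hax, hbx⟩ := (lqv_eq_iff hn x hp.2 (Set.range_comp_subset_range e x hmem)).1 rfl
  have hb := card_filter_le_card_filter_comp_embedding_add e (x · ≤ y)
  simp only [Fintype.card_fin, Nat.add_sub_cancel_left] at hb ⊢
  push_cast at hax hbx
  obtain ⟨p', hpp', hp'1, hap', hbp'⟩ := exists_level_near_of_counts hp hm
    ((card_filter_le _ _).trans_eq (card_fin m)) (card_filter_comp_embedding_le e (x · < y)) hb
    (card_filter_lt_lt_card_filter_le hmem) hax hbx
  exact ⟨p', hpp', ((lqv_eq_iff hm _ hp'1 hmem).2 ⟨hap', hbp'⟩).symm⟩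

theorem contaminated_data_quantile (n ns : ℕ) (hns : ns < n)
    (x : Fin n → ℝ) (p : ℝ) (hp : p ∈ Set.Icc (0 : ℝ) 1)
    (w : Fin (n - ns) → ℝ) (hw : w = fun i => x (Fin.castLE (Nat.sub_le n ns) i))
    (hmem : ∃ i, w i = lqv (by omega : 0 < n) x p) :
    ∃ p' : ℝ, |p' - p| ≤ (ns : ℝ) / (n - ns) ∧
      lqv (by omega : 0 < n) x p = lqv (by omega : 0 < n - ns) w p' := by
  subst hw
  have := exists_lqv_comp_embedding_eq (by omega) (by omega) x
    (Fin.castLEEmb (Nat.sub_le n ns)) hp hmem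
  rwa [Nat.sub_sub_self hns.le, Nat.cast_sub hns.le] at this
end

section
/- Coarsening accuracy: let x be a sorted vector of length n = n1 * n2 (n1, n2 > 1), and let y' = C_{n2}(x) = (x_{n2}, x_{2 n2}, ..., x_{(n1-1) n2}) be its n2-coarsening. Then for any p in (0,1], the degree of separation (with respect to x) between the left p-quantile of x and the left p-quantile of y' is less than 1/n + 1/n1. -/
set_option maxHeartbeats 1000000

lemma sort_self' {N : ℕ} (f : Fin N → ℝ) (hf : Monotone f) : f ∘ Tuple.sort f = f := by
  have := (Tuple.comp_sort_eq_comp_iff_monotone (f := f) (σ := Equiv.refl _)).mpr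
  simp at this
  exact (this hf).symm

theorem coarsening_accuracy (n1 n2 : ℕ) (h1 : 1 < n1) (h2 : 1 < n2)
    (x : Fin (n1 * n2) → ℝ) (hx : Monotone x)
    (y' : Fin (n1 - 1) → ℝ)
    (hy : ∀ j : Fin (n1 - 1), y' j =
      x ⟨((j : ℕ) + 1) * n2 - 1, by
        have hj := j.isLt
        have hle : ((j : ℕ) + 1) * n2 ≤ (n1 - 1) * n2 :=
          Nat.mul_le_mul_right _ (by omega)
        have hlt : (n1 - 1) * n2 < n1 * n2 :=
          (Nat.mul_lt_mul_right (by omega : 0 < n2)).mpr (by omega)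
        omega⟩)
    (p : ℝ) (hp : p ∈ Set.Ioc (0 : ℝ) 1) :
    dosv x (lqv (Nat.mul_pos (by omega) (by omega) : 0 < n1 * n2) x p)
        (lqv (by omega : 0 < n1 - 1) y' p) <
      1 / ((n1 : ℝ) * n2) + 1 / (n1 : ℝ) := by
  obtain ⟨hp0, hp1⟩ := hp
  have hNpos : 0 < n1 * n2 := Nat.mul_pos (by omega) (by omega)
  have hNR : (0:ℝ) < ((n1 * n2 : ℕ) : ℝ) := by positivity
  have hn2R : (0:ℝ) < (n2 : ℝ) := by positivity
  have hm0 : (0:ℝ) < ((n1 - 1 : ℕ):ℝ) := by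
    exact_mod_cast (show 0 < n1 - 1 by omega)
  -- y' is monotone
  have hmy : Monotone y' := by
    intro i j hij
    rw [hy i, hy j]
    apply hx
    have hij' : (i:ℕ) ≤ (j:ℕ) := hij
    have := Nat.mul_le_mul_right n2 (Nat.add_le_add_right hij' 1)
    simp only [Fin.mk_le_mk]
    omega
  set K := ⌈((n1 * n2 : ℕ) : ℝ) * p⌉₊ with hK
  set L := ⌈((n1 - 1 : ℕ) : ℝ) * p⌉₊ with hL
  have hK1 : 1 ≤ K := by rw [hK]; exact Nat.ceil_pos.mpr (by positivity)
  have hKN : K ≤ n1 * n2 := by rw [hK]; exact Nat.ceil_le.mpr (by nlinarith)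
  have hL1 : 1 ≤ L := by rw [hL]; exact Nat.ceil_pos.mpr (by positivity)
  have hLm : L ≤ n1 - 1 := by rw [hL]; exact Nat.ceil_le.mpr (by nlinarith)
  -- indices
  have hkN : K - 1 < n1 * n2 := by omega
  have hlN : L * n2 - 1 < n1 * n2 := by
    have h' : L * n2 ≤ (n1 - 1) * n2 := Nat.mul_le_mul_right _ hLm
    have h'' : (n1 - 1) * n2 < n1 * n2 := (Nat.mul_lt_mul_right (by omega : 0 < n2)).mpr (by omega)
    omega
  set ik : Fin (n1 * n2) := ⟨K - 1, hkN⟩ with hik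
  set il : Fin (n1 * n2) := ⟨L * n2 - 1, hlN⟩ with hil
  -- identify lqv values
  have hA : lqv (Nat.mul_pos (by omega) (by omega) : 0 < n1 * n2) x p = x ik := by
    rw [lqv, sort_self' x hx, hik]
    congr 1
    rw [Fin.mk.injEq, ← hK]
    omega
  have hB : lqv (by omega : 0 < n1 - 1) y' p = x il := by
    rw [lqv, sort_self' y' hmy, hy, hil]
    congr 1
    rw [Fin.mk.injEq]
    simp only [Fin.val_mk]
    rw [← hL]
    have hidx : (n1 - 1 - 1) ⊓ (1 ⊔ L - 1) = L - 1 := by omega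
    rw [hidx, Nat.sub_add_cancel hL1]
  -- numeric bounds on indices
  have hceilN : ((n1 * n2 : ℕ):ℝ) * p ≤ K := Nat.le_ceil _
  have hceilN' : (K:ℝ) < ((n1 * n2 : ℕ):ℝ) * p + 1 := Nat.ceil_lt_add_one (by positivity)
  have hceilm : ((n1 - 1 : ℕ):ℝ) * p ≤ L := Nat.le_ceil _
  have hceilm' : (L:ℝ) < ((n1 - 1 : ℕ):ℝ) * p + 1 := Nat.ceil_lt_add_one (by positivity)
  have hm1 : ((n1 - 1 : ℕ):ℝ) = (n1:ℝ) - 1 := by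
    rw [Nat.cast_sub (by omega)]; simp
  have hmn : ((n1 - 1 : ℕ):ℝ) * n2 = ((n1 * n2 : ℕ):ℝ) - n2 := by
    rw [hm1]; push_cast; ring
  -- (a) L * n2 < K + n2
  have ha : L * n2 < K + n2 := by
    have hr : ((L:ℝ) - 1) * n2 < (K:ℝ) := by
      have h1' : ((L:ℝ) - 1) * n2 < ((n1 - 1 : ℕ):ℝ) * p * n2 := by nlinarith
      have h2' : ((n1 - 1 : ℕ):ℝ) * p * n2 ≤ ((n1 * n2 : ℕ):ℝ) * p := by
        rw [mul_right_comm, hmn]; nlinarith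
      linarith
    have : (L:ℝ) * n2 < (K:ℝ) + n2 := by nlinarith
    exact_mod_cast this
  -- (b) K ≤ L * n2 + n2
  have hb : K ≤ L * n2 + n2 := by
    rw [hK]
    refine Nat.ceil_le.mpr ?_
    have he : ((n1 * n2 : ℕ):ℝ) * p = ((n1 - 1 : ℕ):ℝ) * p * n2 + (n2:ℝ) * p := by
      rw [mul_right_comm, hmn]; ring
    have hc : ((L * n2 + n2 : ℕ):ℝ) = (L:ℝ) * n2 + n2 := by push_cast; ring
    rw [he, hc]
    exact add_le_add (mul_le_mul_of_nonneg_right hceilm hn2R.le)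
      (mul_le_of_le_one_right hn2R.le hp1)
  -- counting bound: any set of entries strictly between the two values has ≤ n2 elements
  have key : ∀ s : Finset (Fin (n1 * n2)),
      (∀ i ∈ s, min (x ik) (x il) < x i ∧ x i < max (x ik) (x il)) → s.card ≤ n2 := by
    intro s hs
    have hsub : s ⊆ Finset.Ioo (min ik il) (max ik il) := by
      intro i hi
      obtain ⟨hi1, hi2⟩ := hs i hi
      rw [← hx.map_min] at hi1
      rw [← hx.map_max] at hi2
      rw [Finset.mem_Ioo]
      constructor
      · by_contra h
        push_neg at h
        exact absurd (hx h) (not_le.mpr hi1)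
      · by_contra h
        push_neg at h
        exact absurd (hx h) (not_le.mpr hi2)
    calc s.card ≤ (Finset.Ioo (min ik il) (max ik il)).card := Finset.card_le_card hsub
      _ = ((max ik il : Fin _) : ℕ) - ((min ik il : Fin _) : ℕ) - 1 := Fin.card_Ioo _ _
      _ ≤ n2 := by
          have e1 : (ik:ℕ) = K - 1 := rfl
          have e2 : (il:ℕ) = L * n2 - 1 := rfl
          rcases le_total ik il with h | h
          · rw [sup_eq_right.mpr h, inf_eq_left.mpr h, e1, e2]
            omega
          · rw [sup_eq_left.mpr h, inf_eq_right.mpr h, e1, e2]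
            omega
  rw [hA, hB]
  have hstep : dosv x (x ik) (x il) ≤ (n2:ℝ) / ((n1 * n2 : ℕ):ℝ) := by
    rw [dosv]
    gcongr
    · exact_mod_cast key _ (fun i hi => (Finset.mem_filter.mp hi).2)
  have hrhs : 1 / ((n1 : ℝ) * n2) + 1 / (n1 : ℝ) = ((n2:ℝ) + 1) / ((n1 * n2 : ℕ):ℝ) := by
    have hn1R : (0:ℝ) < (n1:ℝ) := by positivity
    field_simp
    push_cast
    ring
  rw [hrhs]
  refine lt_of_le_of_lt hstep ?_
  exact (div_lt_div_iff_of_pos_right hNR).mpr (by linarith)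
end

section
/- d-coarsening algorithm guarantee (equal partitions): let x be a vector of length n = m*c*d with m >= 2, partitioned into m blocks of length c*d. Sort each block and take its d-coarsening (the elements of ranks d, 2d, ..., (c-1)d within the block), and stack these into a vector w of length m(c-1). Then for any p in (0,1], the element mu = lq_w(p) satisfies: mu equals a (left) quantile of x at some level p' with |p' - p| <= (m+1)/(m(c-1)), i.e., delta_x(mu, lq_x(p)) <= ((m+1)/(m-1)) * (1/(c-1)) <= 3/(c-1). -/
open Finset

lemma perm_filter_card {N : ℕ} (v : Fin N → ℝ) (σ : Equiv.Perm (Fin N))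
    (P : ℝ → Prop) [DecidablePred fun i : Fin N => P (v i)]
    [DecidablePred fun i : Fin N => P (v (σ i))] :
    (univ.filter fun i => P (v (σ i))).card = (univ.filter fun i => P (v i)).card := by
  apply Finset.card_bij (fun a _ => σ a)
  · intro a ha; simp only [mem_filter, mem_univ, true_and] at ha ⊢; exact ha
  · intro a _ b _ h; exact σ.injective h
  · intro b hb; refine ⟨σ.symm b, ?_, by simp⟩
    simp only [mem_filter, mem_univ, true_and] at hb ⊢; simpa using hb

lemma lower_set_iff {N : ℕ} (Q : Fin N → Prop) [DecidablePred Q]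
    (hQ : ∀ j k : Fin N, j ≤ k → Q k → Q j) (k : Fin N) :
    Q k ↔ (k : ℕ) < (univ.filter Q).card := by
  constructor
  · intro h
    have hsub : Finset.Iic k ⊆ univ.filter Q := by
      intro j hj; simp only [mem_Iic] at hj
      exact mem_filter.2 ⟨mem_univ _, hQ j k hj h⟩
    have := Finset.card_le_card hsub
    rw [Fin.card_Iic] at this; omega
  · intro h; by_contra hk
    have hsub : univ.filter Q ⊆ Finset.Iio k := by
      intro j hj; simp only [mem_filter] at hj
      simp only [mem_Iio]
      by_contra hjk
      exact hk (hQ k j (le_of_not_gt hjk) hj.2)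
    have := Finset.card_le_card hsub
    rw [Fin.card_Iio] at this; omega

lemma prod_filter_card {m K : ℕ} (x : Fin (m * K) → ℝ) (P : ℝ → Prop)
    [DecidablePred fun r : ℝ => P r] :
    (univ.filter fun i : Fin (m * K) => P (x i)).card =
      ∑ i : Fin m, (univ.filter fun j : Fin K => P (x (finProdFinEquiv (i, j)))).card := by
  classical
  rw [Finset.card_filter]
  rw [← Equiv.sum_comp (finProdFinEquiv : Fin m × Fin K ≃ Fin (m * K))
    (fun a => if P (x a) then 1 else 0)]
  rw [Fintype.sum_prod_type]
  congr 1; ext i; rw [Finset.card_filter]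

lemma lqv_eq_sorted {N : ℕ} (hN : 0 < N) (v : Fin N → ℝ) (p : ℝ) (k : ℕ) (h2 : k < N)
    (hk : min (N - 1) (max 1 ⌈(N : ℝ) * p⌉₊ - 1) = k) :
    lqv hN v p = (v ∘ Tuple.sort v) ⟨k, h2⟩ := by
  unfold lqv; exact congrArg _ (Fin.ext hk)

lemma lqv_nat {N : ℕ} (hN : 0 < N) (v : Fin N → ℝ) (k : ℕ) (hk : k < N) :
    lqv hN v (((k : ℝ) + 1) / N) = (v ∘ Tuple.sort v) ⟨k, hk⟩ := by
  apply lqv_eq_sorted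
  have h0 : (N : ℝ) ≠ 0 := Nat.cast_ne_zero.2 hN.ne'
  have h1 : (N : ℝ) * (((k : ℝ) + 1) / N) = ((k + 1 : ℕ) : ℝ) := by push_cast; field_simp
  rw [h1, Nat.ceil_natCast]; omega


section auxArith
variable {m c d p lc Lc k k0 B : ℝ}

lemma aux1 (ed0 : 0 ≤ d) (em0 : 0 ≤ m) (hp0 : 0 ≤ p)
    (h1 : k + 1 ≤ lc + 1) (hl : lc ≤ (m * (c - 1) * p + m) * d) :
    (k + 1) - p * (m * (c * d)) ≤ m * d + 1 := by
  nlinarith [mul_nonneg (mul_nonneg hp0 em0) ed0]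

lemma aux2 (ed0 : 0 ≤ d) (em0 : 0 ≤ m) (hp1 : p ≤ 1)
    (h1 : Lc ≤ k + 1) (hL : m * (c - 1) * p * d ≤ Lc) :
    p * (m * (c * d)) - (k + 1) ≤ m * d := by
  nlinarith [mul_nonneg (mul_nonneg (sub_nonneg.2 hp1) em0) ed0]

lemma aux3 (ed0 : 0 ≤ d) (em0 : 0 ≤ m) (hp1 : p ≤ 1)
    (h2 : B ≤ k0 - Lc) (hk0 : k0 ≤ m * (c * d) * p) (hL : m * (c - 1) * p * d ≤ Lc) :
    B ≤ m * d := by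
  nlinarith [mul_nonneg (mul_nonneg (sub_nonneg.2 hp1) em0) ed0]

lemma aux4 (ed0 : 0 ≤ d) (em0 : 0 ≤ m) (hp0 : 0 ≤ p)
    (h2 : B ≤ lc - (k0 + 1)) (hk0 : m * (c * d) * p ≤ k0 + 1)
    (hl : lc ≤ (m * (c - 1) * p + m) * d) :
    B ≤ m * d := by
  nlinarith [mul_nonneg (mul_nonneg hp0 em0) ed0]

lemma aux5 (em2 : 2 ≤ m) (ec2 : 2 ≤ c) (ed1 : 1 ≤ d) :
    (m * d) * (m * (c - 1)) ≤ (m + 1) * (m * (c * d)) := by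
  nlinarith [mul_nonneg (mul_nonneg (by linarith : (0:ℝ) ≤ m) (by linarith : (0:ℝ) ≤ m)) (by linarith : (0:ℝ) ≤ d),
    mul_nonneg (mul_nonneg (by linarith : (0:ℝ) ≤ m) (by linarith : (0:ℝ) ≤ c)) (by linarith : (0:ℝ) ≤ d)]

lemma aux6 (em2 : 2 ≤ m) (ec2 : 2 ≤ c) (ed1 : 1 ≤ d) :
    (m * d + 1) * (m * (c - 1)) ≤ (m + 1) * (m * (c * d)) := by
  nlinarith [mul_nonneg (mul_nonneg (by linarith : (0:ℝ) ≤ m) (by linarith : (0:ℝ) ≤ m)) (by linarith : (0:ℝ) ≤ d),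
    mul_nonneg (mul_nonneg (by linarith : (0:ℝ) ≤ m) (by linarith : (0:ℝ) ≤ c)) (by linarith : (0:ℝ) ≤ d),
    mul_nonneg (mul_nonneg (by linarith : (0:ℝ) ≤ m) (by linarith : (0:ℝ) ≤ c)) (by linarith : (0:ℝ) ≤ d - 1)]

lemma aux7 (em2 : 2 ≤ m) (ec2 : 2 ≤ c) (ed1 : 1 ≤ d) :
    (m * d) * ((m - 1) * (c - 1)) ≤ (m + 1) * (m * (c * d)) := by
  nlinarith [mul_nonneg (mul_nonneg (by linarith : (0:ℝ) ≤ m) (by linarith : (0:ℝ) ≤ d)) (by linarith : (0:ℝ) ≤ c),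
    mul_nonneg (by linarith : (0:ℝ) ≤ m) (by linarith : (0:ℝ) ≤ d),
    mul_nonneg (mul_nonneg (by linarith : (0:ℝ) ≤ m) (by linarith : (0:ℝ) ≤ d)) (by linarith : (0:ℝ) ≤ m)]

end auxArith

set_option maxHeartbeats 1000000 in
theorem coarsening_algorithm_equal_partitions (m c d : ℕ)
    (hm : 2 ≤ m) (hc : 2 ≤ c) (hd : 0 < d)
    (x : Fin (m * (c * d)) → ℝ)
    (w : Fin (m * (c - 1)) → ℝ)
    (hw : ∀ (i : Fin m) (t : Fin (c - 1)),
      w (finProdFinEquiv (i, t)) =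
        lqv (Nat.mul_pos (by omega) hd : 0 < c * d)
          (fun j : Fin (c * d) => x (finProdFinEquiv (i, j)))
          (((t : ℕ) + 1 : ℝ) / (c : ℝ)))
    (p : ℝ) (hp : p ∈ Set.Ioc (0 : ℝ) 1) :
    (∃ p' : ℝ, |p' - p| ≤ ((m : ℝ) + 1) / ((m : ℝ) * ((c : ℝ) - 1)) ∧
      lqv (Nat.mul_pos (by omega) (by omega) : 0 < m * (c - 1)) w p =
        lqv (Nat.mul_pos (by omega) (Nat.mul_pos (by omega) hd) : 0 < m * (c * d)) x p') ∧
    dosv x (lqv (Nat.mul_pos (by omega) (by omega) : 0 < m * (c - 1)) w p)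
        (lqv (Nat.mul_pos (by omega) (Nat.mul_pos (by omega) hd) : 0 < m * (c * d)) x p) ≤
      (((m : ℝ) + 1) / ((m : ℝ) - 1)) * (1 / ((c : ℝ) - 1)) ∧
    (((m : ℝ) + 1) / ((m : ℝ) - 1)) * (1 / ((c : ℝ) - 1)) ≤ 3 / ((c : ℝ) - 1) := by
  classical
  obtain ⟨hp0, hp1⟩ := hp
  have hK : 0 < c * d := Nat.mul_pos (by omega) hd
  have hMn : 0 < m * (c - 1) := Nat.mul_pos (by omega) (by omega)
  have hNn : 0 < m * (c * d) := Nat.mul_pos (by omega) hK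
  -- real casts
  have em2 : (2 : ℝ) ≤ (m : ℝ) := by exact_mod_cast hm
  have ec2 : (2 : ℝ) ≤ (c : ℝ) := by exact_mod_cast hc
  have ed1 : (1 : ℝ) ≤ (d : ℝ) := by exact_mod_cast hd
  have hMcast : ((m * (c - 1) : ℕ) : ℝ) = (m : ℝ) * ((c : ℝ) - 1) := by
    rw [Nat.cast_mul, Nat.cast_sub (by omega : 1 ≤ c), Nat.cast_one]
  have hNcast : ((m * (c * d) : ℕ) : ℝ) = (m : ℝ) * ((c : ℝ) * (d : ℝ)) := by push_cast; ring
  have hNpos : (0 : ℝ) < ((m * (c * d) : ℕ) : ℝ) := by exact_mod_cast hNn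
  have hMpos : (0 : ℝ) < (m : ℝ) * ((c : ℝ) - 1) := mul_pos (by linarith) (by linarith)
  -- rank of w-quantile
  have hr1 : 1 ≤ ⌈((m * (c - 1) : ℕ) : ℝ) * p⌉₊ :=
    Nat.ceil_pos.2 (by rw [hMcast]; nlinarith)
  have hr2 : ⌈((m * (c - 1) : ℕ) : ℝ) * p⌉₊ ≤ m * (c - 1) := by
    apply Nat.ceil_le.2
    have : ((m * (c - 1) : ℕ) : ℝ) * p ≤ ((m * (c - 1) : ℕ) : ℝ) * 1 := by
      apply mul_le_mul_of_nonneg_left hp1 (by positivity)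
    simpa using this
  set r : ℕ := ⌈((m * (c - 1) : ℕ) : ℝ) * p⌉₊ - 1 with hrdef
  have hrN : r < m * (c - 1) := by omega
  have hmu : lqv hMn w p = (w ∘ Tuple.sort w) ⟨r, hrN⟩ :=
    lqv_eq_sorted _ _ _ r hrN (by omega)
  set mu := (w ∘ Tuple.sort w) ⟨r, hrN⟩ with hmudef
  -- block functions
  set y : Fin m → Fin (c * d) → ℝ := fun i j => x (finProdFinEquiv (i, j)) with hy
  have pfidx : ∀ t : Fin (c - 1), ((t : ℕ) + 1) * d - 1 < c * d := by
    intro t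
    have ht := t.isLt
    have h1 : ((t : ℕ) + 1) * d ≤ (c - 1) * d := Nat.mul_le_mul_right d (by omega)
    have h2 : (c - 1) * d = c * d - d := by rw [Nat.sub_mul, one_mul]
    have h3 : d ≤ c * d := Nat.le_mul_of_pos_left d (by omega)
    omega
  have hw' : ∀ (i : Fin m) (t : Fin (c - 1)),
      w (finProdFinEquiv (i, t)) =
        (y i ∘ Tuple.sort (y i)) ⟨((t : ℕ) + 1) * d - 1, pfidx t⟩ := by
    intro i t
    rw [hw i t]
    apply lqv_eq_sorted
    have hc0 : ((c : ℝ)) ≠ 0 := by positivity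
    have h1 : ((c * d : ℕ) : ℝ) * ((((t : ℕ) : ℝ) + 1) / c) = ((((t : ℕ) + 1) * d : ℕ) : ℝ) := by
      push_cast; field_simp <;> ring
    rw [h1, Nat.ceil_natCast]
    have ht := t.isLt
    have h2 : ((t : ℕ) + 1) * d ≤ (c - 1) * d := Nat.mul_le_mul_right d (by omega)
    have h3 : (c - 1) * d = c * d - d := by rw [Nat.sub_mul, one_mul]
    have h4 : 0 < ((t : ℕ) + 1) * d := Nat.mul_pos (by omega) hd
    omega
  have hblock_le : ∀ i : Fin m,
      (univ.filter fun t : Fin (c - 1) => w (finProdFinEquiv (i, t)) ≤ mu).card * d ≤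
      (univ.filter fun j : Fin (c * d) => y i j ≤ mu).card := by
    intro i
    have hmono := Tuple.monotone_sort (y i)
    set Q : Fin (c - 1) → Prop :=
      fun t => (y i ∘ Tuple.sort (y i)) ⟨((t : ℕ) + 1) * d - 1, pfidx t⟩ ≤ mu with hQ
    have hQdc : ∀ j k : Fin (c - 1), j ≤ k → Q k → Q j := by
      intro j k hjk h
      rw [hQ] at h ⊢
      refine le_trans (hmono ?_) h
      simp only [Fin.mk_le_mk]
      have := Nat.mul_le_mul_right d (show (j : ℕ) + 1 ≤ (k : ℕ) + 1 by
        exact Nat.add_le_add_right hjk 1)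
      omega
    have hfeq : (univ.filter fun t : Fin (c - 1) => w (finProdFinEquiv (i, t)) ≤ mu) =
        univ.filter Q := by
      apply filter_congr; intro t _; simp only [hw' i t, hQ]
    rw [hfeq]
    set s := (univ.filter Q).card with hs
    rcases Nat.eq_zero_or_pos s with h0 | hspos
    · simp [h0]
    have hsle : s ≤ c - 1 := le_trans (card_filter_le _ _) (by simp)
    have ht0 : Q ⟨s - 1, by omega⟩ := (lower_set_iff Q hQdc _).2 (by simp only [Fin.val_mk]; omega)
    have hsd : s * d ≤ c * d - d := by
      have h1 := Nat.mul_le_mul_right d hsle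
      have h2 : (c - 1) * d = c * d - d := by rw [Nat.sub_mul, one_mul]
      omega
    have hsd1 : 0 < s * d := Nat.mul_pos hspos hd
    have hidx : (s - 1 + 1) * d - 1 = s * d - 1 := by
      have h' : s - 1 + 1 = s := by omega
      rw [h']
    have ht0' : (y i ∘ Tuple.sort (y i)) ⟨s * d - 1, by omega⟩ ≤ mu := by
      have e : (⟨(s - 1 + 1) * d - 1, pfidx ⟨s - 1, by omega⟩⟩ : Fin (c * d)) =
          ⟨s * d - 1, by omega⟩ := Fin.ext hidx
      rw [← e]; exact ht0
    have hR := (lower_set_iff (fun j : Fin (c * d) => (y i ∘ Tuple.sort (y i)) j ≤ mu)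
      (fun a b hab h => le_trans (hmono hab) h) ⟨s * d - 1, by omega⟩).1 ht0'
    simp only [Fin.val_mk] at hR
    have hcardeq : (univ.filter fun j : Fin (c * d) => (y i ∘ Tuple.sort (y i)) j ≤ mu).card =
        (univ.filter fun j : Fin (c * d) => y i j ≤ mu).card :=
      perm_filter_card (y i) (Tuple.sort (y i)) (fun r => r ≤ mu)
    rw [hcardeq] at hR
    omega
  have hblock_lt : ∀ i : Fin m,
      (univ.filter fun j : Fin (c * d) => y i j < mu).card ≤
      ((univ.filter fun t : Fin (c - 1) => w (finProdFinEquiv (i, t)) < mu).card + 1) * d := by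
    intro i
    have hmono := Tuple.monotone_sort (y i)
    set Q : Fin (c - 1) → Prop :=
      fun t => (y i ∘ Tuple.sort (y i)) ⟨((t : ℕ) + 1) * d - 1, pfidx t⟩ < mu with hQ
    have hQdc : ∀ j k : Fin (c - 1), j ≤ k → Q k → Q j := by
      intro j k hjk h
      rw [hQ] at h ⊢
      refine lt_of_le_of_lt (hmono ?_) h
      simp only [Fin.mk_le_mk]
      have := Nat.mul_le_mul_right d (Nat.add_le_add_right hjk 1)
      omega
    have hfeq : (univ.filter fun t : Fin (c - 1) => w (finProdFinEquiv (i, t)) < mu) =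
        univ.filter Q := by
      apply filter_congr; intro t _; simp only [hw' i t, hQ]
    rw [hfeq]
    set s := (univ.filter Q).card with hs
    have hsle : s ≤ c - 1 := le_trans (card_filter_le _ _) (by simp)
    have hcardeq : (univ.filter fun j : Fin (c * d) => (y i ∘ Tuple.sort (y i)) j < mu).card =
        (univ.filter fun j : Fin (c * d) => y i j < mu).card :=
      perm_filter_card (y i) (Tuple.sort (y i)) (fun r => r < mu)
    rcases Nat.lt_or_ge s (c - 1) with hlt | hge
    · have hnot : ¬ Q ⟨s, hlt⟩ := by
        intro hcon
        have := (lower_set_iff Q hQdc ⟨s, hlt⟩).1 hcon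
        simp only [Fin.val_mk] at this
        omega
      have hnot' : ¬ ((s + 1) * d - 1 <
          (univ.filter fun j : Fin (c * d) => (y i ∘ Tuple.sort (y i)) j < mu).card) := by
        intro hcon
        exact hnot ((lower_set_iff (fun j : Fin (c * d) => (y i ∘ Tuple.sort (y i)) j < mu)
          (fun a b hab h => lt_of_le_of_lt (hmono hab) h) ⟨(s + 1) * d - 1, pfidx ⟨s, hlt⟩⟩).2
          (by simp only [Fin.val_mk]; omega))
      rw [hcardeq] at hnot'
      have hsd1 : 0 < (s + 1) * d := Nat.mul_pos (by omega) hd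
      omega
    · have hse : s = c - 1 := le_antisymm hsle hge
      have h1 : (univ.filter fun j : Fin (c * d) => y i j < mu).card ≤ c * d :=
        le_trans (card_filter_le _ _) (by simp)
      have h2 : (s + 1) * d = c * d := by rw [hse]; congr 1; omega
      omega

  -- global counts
  set Sle := (univ.filter fun k1 : Fin (m * (c - 1)) => w k1 ≤ mu).card with hSledef
  set Slt := (univ.filter fun k1 : Fin (m * (c - 1)) => w k1 < mu).card with hSltdef
  set Lc := (univ.filter fun i0 : Fin (m * (c * d)) => x i0 ≤ mu).card with hLcdef
  set lc := (univ.filter fun i0 : Fin (m * (c * d)) => x i0 < mu).card with hlcdef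
  have hLsum : Lc = ∑ i, (univ.filter fun j : Fin (c * d) => y i j ≤ mu).card :=
    prod_filter_card x (fun rr => rr ≤ mu)
  have hlsum : lc = ∑ i, (univ.filter fun j : Fin (c * d) => y i j < mu).card :=
    prod_filter_card x (fun rr => rr < mu)
  have hSlesum : Sle =
      ∑ i, (univ.filter fun t : Fin (c - 1) => w (finProdFinEquiv (i, t)) ≤ mu).card :=
    prod_filter_card w (fun rr => rr ≤ mu)
  have hSltsum : Slt =
      ∑ i, (univ.filter fun t : Fin (c - 1) => w (finProdFinEquiv (i, t)) < mu).card :=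
    prod_filter_card w (fun rr => rr < mu)
  have hwmono := Tuple.monotone_sort w
  have hSler : r + 1 ≤ Sle := by
    have h2 := (lower_set_iff (fun k1 : Fin (m * (c - 1)) => w (Tuple.sort w k1) ≤ mu)
      (fun a b hab h => le_trans (hwmono hab) h) ⟨r, hrN⟩).1 (le_refl mu)
    have h3 : (univ.filter fun k1 : Fin (m * (c - 1)) => w (Tuple.sort w k1) ≤ mu).card = Sle :=
      perm_filter_card w (Tuple.sort w) (fun rr => rr ≤ mu)
    simp only [Fin.val_mk] at h2
    omega
  have hSltr : Slt ≤ r := by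
    have h3 : (univ.filter fun k1 : Fin (m * (c - 1)) => w (Tuple.sort w k1) < mu).card = Slt :=
      perm_filter_card w (Tuple.sort w) (fun rr => rr < mu)
    by_contra hcon
    have h2 := (lower_set_iff (fun k1 : Fin (m * (c - 1)) => w (Tuple.sort w k1) < mu)
      (fun a b hab h => lt_of_le_of_lt (hwmono hab) h) ⟨r, hrN⟩).2
      (by simp only [Fin.val_mk]; omega)
    exact absurd h2 (lt_irrefl mu)
  have hLlow : (r + 1) * d ≤ Lc := by
    calc (r + 1) * d ≤ Sle * d := Nat.mul_le_mul_right d hSler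
    _ = ∑ i, (univ.filter fun t : Fin (c - 1) => w (finProdFinEquiv (i, t)) ≤ mu).card * d := by
        rw [hSlesum, Finset.sum_mul]
    _ ≤ ∑ i, (univ.filter fun j : Fin (c * d) => y i j ≤ mu).card :=
        Finset.sum_le_sum (fun i _ => hblock_le i)
    _ = Lc := hLsum.symm
  have hlup : lc ≤ (r + m) * d := by
    calc lc = ∑ i, (univ.filter fun j : Fin (c * d) => y i j < mu).card := hlsum
    _ ≤ ∑ i, ((univ.filter fun t : Fin (c - 1) => w (finProdFinEquiv (i, t)) < mu).card + 1) * d :=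
        Finset.sum_le_sum (fun i _ => hblock_lt i)
    _ = (Slt + m) * d := by
        rw [← Finset.sum_mul, Finset.sum_add_distrib, Finset.sum_const, Finset.card_univ,
          Fintype.card_fin, ← hSltsum, smul_eq_mul, mul_one]
    _ ≤ (r + m) * d := Nat.mul_le_mul_right d (by omega)
  -- mu is a value of x
  have hwit : ∃ j0 : Fin (m * (c * d)), x j0 = mu := by
    set q := Tuple.sort w ⟨r, hrN⟩ with hq
    set pr := finProdFinEquiv.symm q with hpr
    have hq2 : finProdFinEquiv (pr.1, pr.2) = q := by
      rw [Prod.mk.eta, hpr]; exact Equiv.apply_symm_apply _ _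
    refine ⟨finProdFinEquiv (pr.1,
      Tuple.sort (y pr.1) ⟨((pr.2 : ℕ) + 1) * d - 1, pfidx pr.2⟩), ?_⟩
    have h2 := hw' pr.1 pr.2
    rw [hq2] at h2
    exact h2.symm
  have hlL : lc < Lc := by
    obtain ⟨j0, hj0⟩ := hwit
    apply Finset.card_lt_card
    have hsub : (univ.filter fun i0 : Fin (m * (c * d)) => x i0 < mu) ⊆
        (univ.filter fun i0 : Fin (m * (c * d)) => x i0 ≤ mu) := by
      intro a ha; simp only [mem_filter, mem_univ, true_and] at ha ⊢; exact le_of_lt ha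
    rw [Finset.ssubset_iff_of_subset hsub]
    exact ⟨j0, by simp [hj0], by simp [hj0]⟩
  have hLcN : Lc ≤ m * (c * d) := le_trans (card_filter_le _ _) (by simp)
  -- sorted x facts
  have hxmono := Tuple.monotone_sort x
  have hxLc : (univ.filter fun i0 : Fin (m * (c * d)) => x (Tuple.sort x i0) ≤ mu).card = Lc :=
    perm_filter_card x (Tuple.sort x) (fun rr => rr ≤ mu)
  have hxlc : (univ.filter fun i0 : Fin (m * (c * d)) => x (Tuple.sort x i0) < mu).card = lc :=
    perm_filter_card x (Tuple.sort x) (fun rr => rr < mu)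
  have hgx_eq : ∀ (kk : ℕ) (hkk : kk < m * (c * d)), lc ≤ kk → kk < Lc →
      (x ∘ Tuple.sort x) ⟨kk, hkk⟩ = mu := by
    intro kk hkk h1 h2
    have hle : x (Tuple.sort x ⟨kk, hkk⟩) ≤ mu := by
      have h4 := (lower_set_iff (fun i0 : Fin (m * (c * d)) => x (Tuple.sort x i0) ≤ mu)
        (fun a b hab h => le_trans (hxmono hab) h) ⟨kk, hkk⟩).2
        (by simp only [Fin.val_mk]; rw [hxLc]; omega)
      exact h4
    have hge : mu ≤ x (Tuple.sort x ⟨kk, hkk⟩) := by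
      by_contra hcon
      push_neg at hcon
      have h4 := (lower_set_iff (fun i0 : Fin (m * (c * d)) => x (Tuple.sort x i0) < mu)
        (fun a b hab h => lt_of_le_of_lt (hxmono hab) h) ⟨kk, hkk⟩).1 hcon
      simp only [Fin.val_mk] at h4
      rw [hxlc] at h4
      omega
    exact le_antisymm hle hge
  -- x-quantile rank
  have hk01 : 1 ≤ ⌈((m * (c * d) : ℕ) : ℝ) * p⌉₊ := Nat.ceil_pos.2 (mul_pos hNpos hp0)
  have hk02 : ⌈((m * (c * d) : ℕ) : ℝ) * p⌉₊ ≤ m * (c * d) := by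
    apply Nat.ceil_le.2
    have h1 : ((m * (c * d) : ℕ) : ℝ) * p ≤ ((m * (c * d) : ℕ) : ℝ) * 1 :=
      mul_le_mul_of_nonneg_left hp1 hNpos.le
    simpa using h1
  set k0 : ℕ := ⌈((m * (c * d) : ℕ) : ℝ) * p⌉₊ - 1 with hk0def
  have hk0N : k0 < m * (c * d) := by omega
  have hnu : lqv hNn x p = (x ∘ Tuple.sort x) ⟨k0, hk0N⟩ := lqv_eq_sorted _ _ _ _ hk0N (by omega)
  set ν := (x ∘ Tuple.sort x) ⟨k0, hk0N⟩ with hnudef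
  -- real bounds
  have hrup : ((r : ℕ) : ℝ) < ((m * (c - 1) : ℕ) : ℝ) * p := by
    have h1 := Nat.ceil_lt_add_one (show (0 : ℝ) ≤ ((m * (c - 1) : ℕ) : ℝ) * p by positivity)
    have h2 : ((r : ℕ) : ℝ) = (⌈((m * (c - 1) : ℕ) : ℝ) * p⌉₊ : ℝ) - 1 := by
      rw [hrdef, Nat.cast_sub hr1, Nat.cast_one]
    rw [h2]; linarith
  have hrlow : ((m * (c - 1) : ℕ) : ℝ) * p ≤ (r : ℝ) + 1 := by
    have h1 := Nat.le_ceil (((m * (c - 1) : ℕ) : ℝ) * p)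
    have h2 : ((r : ℝ) + 1) = (⌈((m * (c - 1) : ℕ) : ℝ) * p⌉₊ : ℝ) := by
      rw [hrdef, Nat.cast_sub hr1, Nat.cast_one]; ring
    rw [h2]; exact h1
  have hk0up : ((k0 : ℕ) : ℝ) < ((m * (c * d) : ℕ) : ℝ) * p := by
    have h1 := Nat.ceil_lt_add_one (show (0 : ℝ) ≤ ((m * (c * d) : ℕ) : ℝ) * p by positivity)
    have h2 : ((k0 : ℕ) : ℝ) = (⌈((m * (c * d) : ℕ) : ℝ) * p⌉₊ : ℝ) - 1 := by
      rw [hk0def, Nat.cast_sub hk01, Nat.cast_one]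
    rw [h2]; linarith
  have hk0low : ((m * (c * d) : ℕ) : ℝ) * p ≤ (k0 : ℝ) + 1 := by
    have h1 := Nat.le_ceil (((m * (c * d) : ℕ) : ℝ) * p)
    have h2 : ((k0 : ℝ) + 1) = (⌈((m * (c * d) : ℕ) : ℝ) * p⌉₊ : ℝ) := by
      rw [hk0def, Nat.cast_sub hk01, Nat.cast_one]; ring
    rw [h2]; exact h1
  have ed0 : (0 : ℝ) ≤ (d : ℝ) := by linarith
  have em0 : (0 : ℝ) ≤ (m : ℝ) := by linarith
  have ec0 : (0 : ℝ) ≤ (c : ℝ) := by linarith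
  have hLreal : ((m : ℝ) * ((c : ℝ) - 1) * p) * d ≤ (Lc : ℝ) := by
    have h1 : ((r : ℝ) + 1) * d ≤ (Lc : ℝ) := by exact_mod_cast hLlow
    have h2 : (m : ℝ) * ((c : ℝ) - 1) * p ≤ (r : ℝ) + 1 := by rw [← hMcast]; exact hrlow
    calc ((m : ℝ) * ((c : ℝ) - 1) * p) * d ≤ ((r : ℝ) + 1) * d :=
      mul_le_mul_of_nonneg_right h2 ed0
    _ ≤ (Lc : ℝ) := h1
  have hlreal : (lc : ℝ) ≤ ((m : ℝ) * ((c : ℝ) - 1) * p + m) * d := by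
    have h1 : (lc : ℝ) ≤ ((r : ℝ) + m) * d := by exact_mod_cast hlup
    have h2 : (r : ℝ) + m ≤ (m : ℝ) * ((c : ℝ) - 1) * p + m := by
      rw [← hMcast]; linarith [hrup]
    calc (lc : ℝ) ≤ ((r : ℝ) + m) * d := h1
    _ ≤ ((m : ℝ) * ((c : ℝ) - 1) * p + m) * d := mul_le_mul_of_nonneg_right h2 ed0
  -- choose the quantile rank for mu
  set k : ℕ := min (Lc - 1) (max lc k0) with hkdef
  have hkl : lc ≤ k := le_min (by omega) (le_max_left _ _)
  have hkL : k < Lc := by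
    have h1 := min_le_left (Lc - 1) (max lc k0); omega
  have hkN : k < m * (c * d) := by omega
  have hkub : k ≤ lc ∨ k ≤ k0 := by
    have h1 := min_le_right (Lc - 1) (max lc k0)
    rcases le_total lc k0 with h | h
    · right; rw [max_eq_right h] at h1; omega
    · left; rw [max_eq_left h] at h1; omega
  have hklb : Lc ≤ k + 1 ∨ k0 ≤ k := by
    have h1 : min (Lc - 1) k0 ≤ k := min_le_min (le_refl _) (le_max_right lc k0)
    rcases le_total (Lc - 1) k0 with h | h
    · left; rw [min_eq_left h] at h1; omega
    · right; rw [min_eq_right h] at h1; omega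
  have hup : ((k : ℝ) + 1) - p * ((m * (c * d) : ℕ) : ℝ) ≤ (m : ℝ) * (d : ℝ) + 1 := by
    rcases hkub with h | h
    · have h1 : ((k : ℝ) + 1) ≤ (lc : ℝ) + 1 := by exact_mod_cast Nat.succ_le_succ h
      rw [hNcast]
      exact aux1 ed0 em0 hp0.le h1 hlreal
    · have h1 : ((k : ℝ) + 1) ≤ (k0 : ℝ) + 1 := by exact_mod_cast Nat.succ_le_succ h
      have hmd : (0:ℝ) ≤ (m:ℝ) * (d:ℝ) := mul_nonneg em0 ed0
      linarith [hk0up]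
  have hdown : p * ((m * (c * d) : ℕ) : ℝ) - ((k : ℝ) + 1) ≤ (m : ℝ) * (d : ℝ) := by
    rcases hklb with h | h
    · have h1 : (Lc : ℝ) ≤ (k : ℝ) + 1 := by exact_mod_cast h
      rw [hNcast]
      exact aux2 ed0 em0 hp1 h1 hLreal
    · have h1 : ((k0 : ℝ)) ≤ (k : ℝ) := by exact_mod_cast h
      have hmd : (0:ℝ) ≤ (m:ℝ) * (d:ℝ) := mul_nonneg em0 ed0
      linarith [hk0low]
  -- the bound on the count between mu and ν
  have hcardB : ((univ.filter fun i0 : Fin (m * (c * d)) =>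
      min mu ν < x i0 ∧ x i0 < max mu ν).card : ℝ) ≤ (m : ℝ) * (d : ℝ) := by
    rcases lt_trichotomy mu ν with hlt | heq | hgt
    · have hmin : min mu ν = mu := min_eq_left hlt.le
      have hmax : max mu ν = ν := max_eq_right hlt.le
      have hsub : (univ.filter fun i0 : Fin (m * (c * d)) =>
          min mu ν < x i0 ∧ x i0 < max mu ν) ⊆
          (univ.filter fun i0 : Fin (m * (c * d)) => x i0 < ν) \
          (univ.filter fun i0 : Fin (m * (c * d)) => x i0 ≤ mu) := by
        intro a ha
        simp only [mem_filter, mem_univ, true_and, mem_sdiff, hmin, hmax] at ha ⊢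
        exact ⟨ha.2, not_le.2 ha.1⟩
      have hsub2 : (univ.filter fun i0 : Fin (m * (c * d)) => x i0 ≤ mu) ⊆
          (univ.filter fun i0 : Fin (m * (c * d)) => x i0 < ν) := by
        intro a ha
        simp only [mem_filter, mem_univ, true_and] at ha ⊢
        exact lt_of_le_of_lt ha hlt
      have h1 : (univ.filter fun i0 : Fin (m * (c * d)) =>
          min mu ν < x i0 ∧ x i0 < max mu ν).card ≤
          (univ.filter fun i0 : Fin (m * (c * d)) => x i0 < ν).card - Lc := by
        refine le_trans (Finset.card_le_card hsub) ?_
        rw [Finset.card_sdiff_of_subset hsub2]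
      have hLclt : Lc ≤ (univ.filter fun i0 : Fin (m * (c * d)) => x i0 < ν).card :=
        Finset.card_le_card hsub2
      have hnucount : (univ.filter fun i0 : Fin (m * (c * d)) => x i0 < ν).card ≤ k0 := by
        have hpc : (univ.filter fun i0 : Fin (m * (c * d)) =>
            x (Tuple.sort x i0) < ν).card =
            (univ.filter fun i0 : Fin (m * (c * d)) => x i0 < ν).card :=
          perm_filter_card x (Tuple.sort x) (fun rr => rr < ν)
        by_contra hcon
        push_neg at hcon
        have h4 := (lower_set_iff (fun i0 : Fin (m * (c * d)) => x (Tuple.sort x i0) < ν)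
          (fun a b hab h => lt_of_le_of_lt (hxmono hab) h) ⟨k0, hk0N⟩).2
          (by simp only [Fin.val_mk]; rw [hpc]; omega)
        exact absurd h4 (lt_irrefl ν)
      have h2 : ((univ.filter fun i0 : Fin (m * (c * d)) =>
          min mu ν < x i0 ∧ x i0 < max mu ν).card : ℝ) ≤ (k0 : ℝ) - (Lc : ℝ) := by
        have : (univ.filter fun i0 : Fin (m * (c * d)) =>
            min mu ν < x i0 ∧ x i0 < max mu ν).card + Lc ≤ k0 := by omega
        have := (Nat.cast_le (α := ℝ)).2 this
        push_cast at this
        linarith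
      rw [hNcast] at hk0up
      exact aux3 ed0 em0 hp1 h2 (by linarith [hk0up] : ((k0:ℕ):ℝ) ≤ (m:ℝ) * ((c:ℝ) * (d:ℝ)) * p) hLreal
    · have hemp : (univ.filter fun i0 : Fin (m * (c * d)) =>
          min mu ν < x i0 ∧ x i0 < max mu ν) = ∅ := by
        apply Finset.filter_false_of_mem
        intro i0 _ hcon
        rw [heq, min_self, max_self] at hcon
        exact absurd (lt_trans hcon.1 hcon.2) (lt_irrefl _)
      rw [hemp]
      simp only [Finset.card_empty, Nat.cast_zero]
      positivity
    · have hmin : min mu ν = ν := min_eq_right hgt.le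
      have hmax : max mu ν = mu := max_eq_left hgt.le
      have hsub : (univ.filter fun i0 : Fin (m * (c * d)) =>
          min mu ν < x i0 ∧ x i0 < max mu ν) ⊆
          (univ.filter fun i0 : Fin (m * (c * d)) => x i0 < mu) \
          (univ.filter fun i0 : Fin (m * (c * d)) => x i0 ≤ ν) := by
        intro a ha
        simp only [mem_filter, mem_univ, true_and, mem_sdiff, hmin, hmax] at ha ⊢
        exact ⟨ha.2, not_le.2 ha.1⟩
      have hsub2 : (univ.filter fun i0 : Fin (m * (c * d)) => x i0 ≤ ν) ⊆
          (univ.filter fun i0 : Fin (m * (c * d)) => x i0 < mu) := by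
        intro a ha
        simp only [mem_filter, mem_univ, true_and] at ha ⊢
        exact lt_of_le_of_lt ha hgt
      have h1 : (univ.filter fun i0 : Fin (m * (c * d)) =>
          min mu ν < x i0 ∧ x i0 < max mu ν).card ≤
          lc - (univ.filter fun i0 : Fin (m * (c * d)) => x i0 ≤ ν).card := by
        refine le_trans (Finset.card_le_card hsub) ?_
        rw [Finset.card_sdiff_of_subset hsub2]
      have hnucount : k0 + 1 ≤ (univ.filter fun i0 : Fin (m * (c * d)) => x i0 ≤ ν).card := by
        have hpc : (univ.filter fun i0 : Fin (m * (c * d)) =>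
            x (Tuple.sort x i0) ≤ ν).card =
            (univ.filter fun i0 : Fin (m * (c * d)) => x i0 ≤ ν).card :=
          perm_filter_card x (Tuple.sort x) (fun rr => rr ≤ ν)
        have h4 := (lower_set_iff (fun i0 : Fin (m * (c * d)) => x (Tuple.sort x i0) ≤ ν)
          (fun a b hab h => le_trans (hxmono hab) h) ⟨k0, hk0N⟩).1 (le_refl ν)
        simp only [Fin.val_mk] at h4
        rw [hpc] at h4
        omega
      have hcle : (univ.filter fun i0 : Fin (m * (c * d)) => x i0 ≤ ν).card ≤ lc :=
        Finset.card_le_card hsub2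
      have h2 : ((univ.filter fun i0 : Fin (m * (c * d)) =>
          min mu ν < x i0 ∧ x i0 < max mu ν).card : ℝ) ≤ (lc : ℝ) - ((k0 : ℝ) + 1) := by
        have : (univ.filter fun i0 : Fin (m * (c * d)) =>
            min mu ν < x i0 ∧ x i0 < max mu ν).card + (k0 + 1) ≤ lc := by omega
        have := (Nat.cast_le (α := ℝ)).2 this
        push_cast at this
        linarith
      rw [hNcast] at hk0low
      exact aux4 ed0 em0 hp0.le h2 (by linarith [hk0low] : (m:ℝ) * ((c:ℝ) * (d:ℝ)) * p ≤ ((k0:ℕ):ℝ) + 1) hlreal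
  refine ⟨⟨((k : ℝ) + 1) / ((m * (c * d) : ℕ) : ℝ), ?_, ?_⟩, ?_, ?_⟩
  · rw [abs_le]
    constructor
    · rw [neg_le, neg_sub]
      have key : p - ((k : ℝ) + 1) / ((m * (c * d) : ℕ) : ℝ) =
          (p * ((m * (c * d) : ℕ) : ℝ) - ((k : ℝ) + 1)) / ((m * (c * d) : ℕ) : ℝ) := by
        field_simp <;> ring
      rw [key, div_le_div_iff₀ hNpos hMpos]
      calc (p * ((m * (c * d) : ℕ) : ℝ) - ((k : ℝ) + 1)) * ((m : ℝ) * ((c : ℝ) - 1)) ≤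
          ((m : ℝ) * (d : ℝ)) * ((m : ℝ) * ((c : ℝ) - 1)) :=
            mul_le_mul_of_nonneg_right hdown hMpos.le
      _ ≤ ((m : ℝ) + 1) * ((m * (c * d) : ℕ) : ℝ) := by
          rw [hNcast]; exact aux5 em2 ec2 ed1
    · have key : ((k : ℝ) + 1) / ((m * (c * d) : ℕ) : ℝ) - p =
          (((k : ℝ) + 1) - p * ((m * (c * d) : ℕ) : ℝ)) / ((m * (c * d) : ℕ) : ℝ) := by
        field_simp <;> ring
      rw [key, div_le_div_iff₀ hNpos hMpos]
      calc (((k : ℝ) + 1) - p * ((m * (c * d) : ℕ) : ℝ)) * ((m : ℝ) * ((c : ℝ) - 1)) ≤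
          ((m : ℝ) * (d : ℝ) + 1) * ((m : ℝ) * ((c : ℝ) - 1)) :=
            mul_le_mul_of_nonneg_right hup hMpos.le
      _ ≤ ((m : ℝ) + 1) * ((m * (c * d) : ℕ) : ℝ) := by
          rw [hNcast]; exact aux6 em2 ec2 ed1
  · rw [hmu, lqv_nat hNn x k hkN]
    exact (hgx_eq k hkN hkl hkL).symm
  · rw [hmu, hnu]
    unfold dosv
    have hBrw : ((m : ℝ) + 1) / ((m : ℝ) - 1) * (1 / ((c : ℝ) - 1)) =
        ((m : ℝ) + 1) / (((m : ℝ) - 1) * ((c : ℝ) - 1)) := by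
      rw [div_mul_div_comm, mul_one]
    have hden2 : (0 : ℝ) < ((m : ℝ) - 1) * ((c : ℝ) - 1) := mul_pos (by linarith) (by linarith)
    rw [hBrw, div_le_div_iff₀ hNpos hden2]
    calc ((univ.filter fun i0 : Fin (m * (c * d)) =>
        min mu ν < x i0 ∧ x i0 < max mu ν).card : ℝ) * (((m : ℝ) - 1) * ((c : ℝ) - 1)) ≤
        ((m : ℝ) * (d : ℝ)) * (((m : ℝ) - 1) * ((c : ℝ) - 1)) :=
          mul_le_mul_of_nonneg_right hcardB hden2.le
    _ ≤ ((m : ℝ) + 1) * ((m * (c * d) : ℕ) : ℝ) := by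
        rw [hNcast]; exact aux7 em2 ec2 ed1
  · have h3 : ((m : ℝ) + 1) / ((m : ℝ) - 1) ≤ 3 := by
      rw [div_le_iff₀ (by linarith : (0 : ℝ) < (m : ℝ) - 1)]; linarith
    calc ((m : ℝ) + 1) / ((m : ℝ) - 1) * (1 / ((c : ℝ) - 1)) ≤ 3 * (1 / ((c : ℝ) - 1)) :=
      mul_le_mul_of_nonneg_right h3 (div_nonneg zero_le_one (by linarith))
    _ = 3 / ((c : ℝ) - 1) := by rw [mul_one_div]
end

section
/- d-coarsening algorithm guarantee (unequal partitions): let x be a vector of length n = sum_{i=1}^m l_i with m >= 2 and l_i = c_i * d, and set C = sum_{i=1}^m c_i. Sort each block x^i, take its d-coarsening (entries of ranks d, 2d, ..., (c_i - 1)d), stack the results into w (of length C - m), and let mu = lq_w(p). Then mu is a quantile of x at some level p' with |p' - p| <= (m+1)/(C - m); in particular delta_x(mu, lq_x(p)) <= (m+1)/(C - m). -/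
/-!
Let `W = C - m`, `N = (W + m) d`, and let `μ = lq_w(p)` be the `q`-th smallest entry of `w`,
`q = ⌈W p⌉`. The coarsening of a block is sorted and its `t`-th entry has rank `t d` in the block;
so if `s` of its entries are `≤ μ`, at least `d s` entries of the block are `≤ μ`, and if `s` of
them are `< μ`, at most `d (s + 1)` entries of the block are `< μ`. Summing over the `m` blocks,
at least `d q` entries of `x` are `≤ μ` and at most `d (q - 1 + m)` are `< μ`. As `μ` is itself
an entry of `x`, it is the `k`-th smallest entry of `x` for every `k` between these two counts,
and this range contains a `k` with `|k - ⌈N p⌉| ≤ d m`. Then `p' = k / N` satisfies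
`|p' - p| ≤ (d m + 1) / N ≤ (m + 1) / W`, and at most `d m` entries of `x` lie strictly between
its `k`-th and `⌈N p⌉`-th smallest entries.
-/

open Finset

theorem Fin.lt_card_filter_iff_of_isLowerSet {n : ℕ} {P : Fin n → Prop} [DecidablePred P]
    (hP : IsLowerSet {j | P j}) (k : Fin n) : k < #{j | P j} ↔ P k := by
  constructor
  · intro hk
    by_contra hPk
    have hsub : (univ.filter fun j => P j) ⊆ Iio k := fun j hj =>
      mem_Iio.2 (lt_of_not_ge fun hkj => hPk (hP hkj (mem_filter.1 hj).2))
    have := card_le_card hsub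
    rw [Fin.card_Iio] at this
    omega
  · intro hPk
    have hsub : Iic k ⊆ univ.filter fun j => P j := fun j hj =>
      mem_filter.2 ⟨mem_univ j, hP (mem_Iic.1 hj) hPk⟩
    have := card_le_card hsub
    rw [Fin.card_Iic] at this
    omega

theorem card_filter_comp_equiv {α β : Type*} [Fintype α] [Fintype β] (e : α ≃ β)
    (P : β → Prop) [DecidablePred P] : #{a | P (e a)} = #{b | P b} :=
  card_equiv e (by simp)

theorem card_filter_eq_sum_sigma {ι γ : Type*} [Fintype ι] {β : ι → Type*} [∀ i, Fintype (β i)]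
    [Fintype γ] (e : (Σ i, β i) ≃ γ) (P : γ → Prop) [DecidablePred P] :
    #{y | P y} = ∑ i, #{b : β i | P (e ⟨i, b⟩)} := by
  simp only [card_filter]
  rw [← Equiv.sum_comp e, Fintype.sum_sigma]

section SortedTuple

variable {α : Type*} [LinearOrder α] {n : ℕ} (v : Fin n → α) {a : α} {k : Fin n}

theorem lt_card_filter_le_iff_sort_le : k < #{j | v j ≤ a} ↔ (v ∘ Tuple.sort v) k ≤ a := by
  rw [← card_filter_comp_equiv (Tuple.sort v) (v · ≤ a)]
  exact Fin.lt_card_filter_iff_of_isLowerSet ((isLowerSet_Iic a).preimage (Tuple.monotone_sort v)) k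

theorem card_filter_lt_le_iff_le_sort : #{j | v j < a} ≤ k ↔ a ≤ (v ∘ Tuple.sort v) k := by
  rw [← card_filter_comp_equiv (Tuple.sort v) (v · < a), ← not_lt, ← not_lt]
  exact not_congr <|
    Fin.lt_card_filter_iff_of_isLowerSet ((isLowerSet_Iio a).preimage (Tuple.monotone_sort v)) k

theorem sort_eq_of_card_filter (hlt : #{j | v j < a} ≤ k) (hle : k < #{j | v j ≤ a}) :
    (v ∘ Tuple.sort v) k = a :=
  le_antisymm ((lt_card_filter_le_iff_sort_le v).1 hle) ((card_filter_lt_le_iff_le_sort v).1 hlt)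

theorem card_filter_lt_lt_card_filter_le_s19 (ha : ∃ j, v j = a) :
    #{j | v j < a} < #{j | v j ≤ a} := by
  obtain ⟨j, rfl⟩ := ha
  refine card_lt_card ⟨monotone_filter_right _ fun _ _ => le_of_lt, fun h => ?_⟩
  simpa using h (mem_filter.2 ⟨mem_univ j, le_rfl⟩)

theorem card_filter_min_sort_lt_lt_max_sort_le (i j : Fin n) :
    #{t | min ((v ∘ Tuple.sort v) i) ((v ∘ Tuple.sort v) j) < v t ∧
      v t < max ((v ∘ Tuple.sort v) i) ((v ∘ Tuple.sort v) j)} ≤ max (i : ℕ) j - min (i : ℕ) j := by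
  wlog hij : i ≤ j generalizing i j
  · simpa only [min_comm, max_comm] using this j i (le_of_not_ge hij)
  have hmono := Tuple.monotone_sort v
  rw [min_eq_left (hmono hij), max_eq_right (hmono hij), ← card_filter_comp_equiv (Tuple.sort v)]
  refine (card_le_card fun t ht => ?_).trans ((Fin.card_Ioo i j).trans_le (by omega))
  simp only [mem_filter, mem_univ, true_and] at ht
  exact mem_Ioo.2 ⟨hmono.reflect_lt ht.1, hmono.reflect_lt ht.2⟩

end SortedTuple

theorem lqv_eq_sort_of_ceil {N : ℕ} (hN : 0 < N) (v : Fin N → ℝ) {p : ℝ} (k : Fin N)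
    (hk : (k : ℕ) + 1 = ⌈(N : ℝ) * p⌉₊) : lqv hN v p = (v ∘ Tuple.sort v) k := by
  unfold lqv
  congr 1
  apply Fin.ext
  simp only [← hk]
  omega

theorem lqv_natCast_div {N : ℕ} (hN : 0 < N) (v : Fin N → ℝ) (k : Fin N) :
    lqv hN v (((k : ℕ) + 1 : ℝ) / N) = (v ∘ Tuple.sort v) k := by
  refine lqv_eq_sort_of_ceil hN v k ?_
  rw [mul_div_cancel₀ _ (by positivity), ← Nat.cast_add_one, Nat.ceil_natCast]

-- The entries of `v` of ranks `d, 2d, …, (c - 1)d`, ranks counted from `1`.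
def coarsening {α : Type*} [LinearOrder α] {c d : ℕ} (hd : 0 < d) (v : Fin (c * d) → α)
    (t : Fin (c - 1)) : α :=
  (v ∘ Tuple.sort v) ⟨(t + 1) * d - 1, by
    have := Nat.mul_le_mul_right d (show (t : ℕ) + 1 ≤ c by omega)
    have := Nat.mul_pos (Nat.add_one_pos (t : ℕ)) hd
    omega⟩

theorem lqv_succ_div_eq_coarsening {c d : ℕ} (hN : 0 < c * d) (hd : 0 < d)
    (v : Fin (c * d) → ℝ) (t : Fin (c - 1)) :
    lqv hN v (((t : ℕ) + 1 : ℝ) / c) = coarsening hd v t := by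
  refine lqv_eq_sort_of_ceil hN v _ ?_
  have hc : (c : ℝ) ≠ 0 := by exact_mod_cast (Nat.pos_of_mul_pos_right hN).ne'
  have := Nat.mul_pos (Nat.add_one_pos (t : ℕ)) hd
  rw [show ((c * d : ℕ) : ℝ) * (((t : ℕ) + 1 : ℝ) / c) = (((t + 1) * d : ℕ) : ℝ) by
    push_cast; field_simp, Nat.ceil_natCast]
  simp only
  omega

section Coarsening

variable {α : Type*} [LinearOrder α] {c d : ℕ} (hd : 0 < d) (v : Fin (c * d) → α) (a : α)

theorem coarsening_monotone : Monotone (coarsening hd v) := fun _ _ hst =>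
  Tuple.monotone_sort v <| Fin.mk_le_mk.2 <|
    Nat.sub_le_sub_right (Nat.mul_le_mul_right d (Nat.succ_le_succ hst)) 1

theorem mul_card_filter_coarsening_le :
    d * #{t | coarsening hd v t ≤ a} ≤ #{j | v j ≤ a} := by
  set s := #{t | coarsening hd v t ≤ a}
  rcases Nat.eq_zero_or_pos s with hs | hs
  · simp [hs]
  have hsc : s ≤ c - 1 := (card_le_univ _).trans (Fintype.card_fin _).le
  have hle : coarsening hd v ⟨s - 1, by omega⟩ ≤ a :=
    (Fin.lt_card_filter_iff_of_isLowerSet (P := (coarsening hd v · ≤ a))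
      ((isLowerSet_Iic a).preimage (coarsening_monotone hd v)) _).1 (by simp only; omega)
  have : s * d - 1 < #{j | v j ≤ a} := by
    simpa only [Nat.sub_add_cancel hs] using (lt_card_filter_le_iff_sort_le v).2 hle
  have := Nat.mul_comm d s
  omega

theorem card_filter_lt_le_mul_coarsening :
    #{j | v j < a} ≤ d * (#{t | coarsening hd v t < a} + 1) := by
  set s := #{t | coarsening hd v t < a}
  by_cases hsc : s < c - 1
  · have hle : a ≤ coarsening hd v ⟨s, hsc⟩ := not_lt.1 fun hlt =>
      ((Fin.lt_card_filter_iff_of_isLowerSet (P := (coarsening hd v · < a))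
        ((isLowerSet_Iio a).preimage (coarsening_monotone hd v)) _).2 hlt).false
    have : #{j | v j < a} ≤ (s + 1) * d - 1 := (card_filter_lt_le_iff_le_sort v).2 hle
    have := Nat.mul_comm d (s + 1)
    omega
  · calc #{j | v j < a} ≤ c * d := (card_le_univ _).trans (Fintype.card_fin _).le
      _ ≤ (s + 1) * d := Nat.mul_le_mul_right d (by omega)
      _ = d * (s + 1) := Nat.mul_comm _ _

end Coarsening

def IsStackedCoarsening {α : Type*} [LinearOrder α] {ι : Type*} {c : ι → ℕ} {d N W : ℕ}
    (hd : 0 < d) (e : (Σ i, Fin (c i * d)) ≃ Fin N) (f : (Σ i, Fin (c i - 1)) ≃ Fin W)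
    (x : Fin N → α) (w : Fin W → α) : Prop :=
  ∀ i t, w (f ⟨i, t⟩) = coarsening hd (fun j => x (e ⟨i, j⟩)) t

section Stacking

variable {α : Type*} [LinearOrder α] {ι : Type*} {c : ι → ℕ} {d N W : ℕ} {hd : 0 < d}
  {e : (Σ i, Fin (c i * d)) ≃ Fin N} {f : (Σ i, Fin (c i - 1)) ≃ Fin W}
  {x : Fin N → α} {w : Fin W → α}

theorem IsStackedCoarsening.mul_card_filter_le_le [Fintype ι]
    (hw : IsStackedCoarsening hd e f x w) (a : α) :
    d * #{j | w j ≤ a} ≤ #{j | x j ≤ a} := by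
  rw [card_filter_eq_sum_sigma e, card_filter_eq_sum_sigma f, mul_sum]
  simp only [hw _ _]
  exact sum_le_sum fun i _ => mul_card_filter_coarsening_le hd _ a

theorem IsStackedCoarsening.card_filter_lt_le [Fintype ι]
    (hw : IsStackedCoarsening hd e f x w) (a : α) :
    #{j | x j < a} ≤ d * (#{j | w j < a} + Fintype.card ι) := by
  rw [card_filter_eq_sum_sigma e, card_filter_eq_sum_sigma f, Fintype.card_eq_sum_ones,
    ← sum_add_distrib, mul_sum]
  simp only [hw _ _]
  exact sum_le_sum fun i _ => card_filter_lt_le_mul_coarsening hd _ a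

theorem IsStackedCoarsening.exists_apply_eq (hw : IsStackedCoarsening hd e f x w) (j : Fin W) :
    ∃ k, x k = w j := by
  obtain ⟨⟨i, t⟩, rfl⟩ := f.surjective j
  exact ⟨_, (hw i t).symm⟩

end Stacking

theorem mul_ceil_lt_ceil_add {N W m d : ℕ} (hNW : N = (W + m) * d) (hd : 0 < d) {p : ℝ}
    (hp : 0 ≤ p) : d * ⌈(W : ℝ) * p⌉₊ < ⌈(N : ℝ) * p⌉₊ + d := by
  subst hNW
  have hq := Nat.ceil_lt_add_one (mul_nonneg W.cast_nonneg hp)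
  have hk := Nat.le_ceil ((((W + m) * d : ℕ) : ℝ) * p)
  have hd' : (0 : ℝ) < d := by exact_mod_cast hd
  push_cast at hk ⊢
  exact_mod_cast (show (d : ℝ) * ⌈(W : ℝ) * p⌉₊ < ⌈((W + m) * d : ℝ) * p⌉₊ + d by
    nlinarith [mul_nonneg (mul_nonneg (m.cast_nonneg : (0 : ℝ) ≤ m) hd'.le) hp])

theorem ceil_le_mul_ceil_add {N W m d : ℕ} (hNW : N = (W + m) * d) {p : ℝ} (hp : p ≤ 1) :
    ⌈(N : ℝ) * p⌉₊ ≤ d * ⌈(W : ℝ) * p⌉₊ + d * m := by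
  subst hNW
  have hq := Nat.le_ceil ((W : ℝ) * p)
  refine Nat.ceil_le.2 ?_
  push_cast
  nlinarith [mul_nonneg (mul_nonneg (m.cast_nonneg : (0 : ℝ) ≤ m) (d.cast_nonneg : (0 : ℝ) ≤ d))
    (sub_nonneg.2 hp), (d.cast_nonneg : (0 : ℝ) ≤ d)]

theorem IsStackedCoarsening.exists_sort_eq_lqv {ι : Type*} [Fintype ι] {c : ι → ℕ} {d N W : ℕ}
    {hd : 0 < d} {e : (Σ i, Fin (c i * d)) ≃ Fin N} {f : (Σ i, Fin (c i - 1)) ≃ Fin W}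
    {x : Fin N → ℝ} {w : Fin W → ℝ} (hw : IsStackedCoarsening hd e f x w)
    (hNW : N = (W + Fintype.card ι) * d) (hW : 0 < W) {p : ℝ} (hp : p ∈ Set.Ioc 0 1) :
    ∃ k : Fin N, (x ∘ Tuple.sort x) k = lqv hW w p ∧
      (k : ℕ) + 1 ≤ ⌈(N : ℝ) * p⌉₊ + d * Fintype.card ι ∧
      ⌈(N : ℝ) * p⌉₊ ≤ k + 1 + d * Fintype.card ι := by
  obtain ⟨hp0, hp1⟩ := hp
  have hk0 := mul_ceil_lt_ceil_add hNW hd hp0.le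
  have hk0' := ceil_le_mul_ceil_add hNW hp1
  set q := ⌈(W : ℝ) * p⌉₊
  have hq1 : 1 ≤ q := Nat.one_le_ceil_iff.2 (by positivity)
  have hqW : q ≤ W := Nat.ceil_le.2 (mul_le_of_le_one_right W.cast_nonneg hp1)
  set μ := lqv hW w p
  have hμ : (w ∘ Tuple.sort w) ⟨q - 1, by omega⟩ = μ :=
    (lqv_eq_sort_of_ceil hW w _ (Nat.sub_add_cancel hq1)).symm
  have hA : q - 1 < #{j | w j ≤ μ} := (lt_card_filter_le_iff_sort_le w).2 hμ.le
  have hB : #{j | w j < μ} ≤ q - 1 := (card_filter_lt_le_iff_le_sort w).2 hμ.ge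
  have hL : d * q ≤ #{j | x j ≤ μ} :=
    (Nat.mul_le_mul_left d (show q ≤ #{j | w j ≤ μ} by omega)).trans (hw.mul_card_filter_le_le μ)
  have hS : #{j | x j < μ} + d ≤ d * q + d * Fintype.card ι :=
    calc #{j | x j < μ} + d ≤ d * (#{j | w j < μ} + Fintype.card ι) + d :=
          Nat.add_le_add_right (hw.card_filter_lt_le μ) d
      _ = d * (#{j | w j < μ} + 1) + d * Fintype.card ι := by ring
      _ ≤ d * q + d * Fintype.card ι := by gcongr; omega
  have hSL : #{j | x j < μ} < #{j | x j ≤ μ} :=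
    card_filter_lt_lt_card_filter_le_s19 x (hμ ▸ hw.exists_apply_eq _)
  have hLN : #{j | x j ≤ μ} ≤ N := (card_le_univ _).trans (Fintype.card_fin _).le
  -- clamp `⌈N p⌉` into the ranks `(#{x < μ}, #{x ≤ μ}]`, all of which `μ` holds
  refine ⟨⟨max (#{j | x j < μ} + 1) (min #{j | x j ≤ μ} ⌈(N : ℝ) * p⌉₊) - 1, by omega⟩,
    sort_eq_of_card_filter x (by simp only; omega) (by simp only; omega), ?_, ?_⟩ <;>
  simp only <;> omega

section OrderStatistics

variable {N : ℕ} (hN : 0 < N) (v : Fin N → ℝ) {p : ℝ} (k : Fin N) {δ : ℕ}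

theorem exists_abs_sub_le_sort_eq_lqv (h₁ : (k : ℕ) + 1 ≤ ⌈(N : ℝ) * p⌉₊ + δ)
    (h₂ : ⌈(N : ℝ) * p⌉₊ ≤ k + 1 + δ) (hp : 0 ≤ p) :
    ∃ p' : ℝ, |p' - p| ≤ ((δ : ℝ) + 1) / N ∧ (v ∘ Tuple.sort v) k = lqv hN v p' := by
  refine ⟨((k : ℕ) + 1 : ℝ) / N, ?_, (lqv_natCast_div hN v k).symm⟩
  have hN' : (0 : ℝ) < N := by exact_mod_cast hN
  have hc₁ := Nat.le_ceil ((N : ℝ) * p)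
  have hc₂ := Nat.ceil_lt_add_one (mul_nonneg hN'.le hp)
  have h₁' : ((k : ℕ) : ℝ) + 1 ≤ ⌈(N : ℝ) * p⌉₊ + δ := by exact_mod_cast h₁
  have h₂' : (⌈(N : ℝ) * p⌉₊ : ℝ) ≤ (k : ℕ) + 1 + δ := by exact_mod_cast h₂
  rw [show ((k : ℕ) + 1 : ℝ) / N - p = ((k : ℕ) + 1 - N * p) / N by field_simp, abs_div,
    abs_of_pos hN']
  gcongr
  rw [abs_le]
  constructor <;> linarith

theorem dosv_sort_lqv_le (h₁ : (k : ℕ) + 1 ≤ ⌈(N : ℝ) * p⌉₊ + δ)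
    (h₂ : ⌈(N : ℝ) * p⌉₊ ≤ k + 1 + δ) (hp : p ∈ Set.Ioc 0 1) :
    dosv v ((v ∘ Tuple.sort v) k) (lqv hN v p) ≤ δ / N := by
  have hr₁ : 1 ≤ ⌈(N : ℝ) * p⌉₊ := Nat.one_le_ceil_iff.2 (mul_pos (by exact_mod_cast hN) hp.1)
  have hrN : ⌈(N : ℝ) * p⌉₊ ≤ N := Nat.ceil_le.2 (mul_le_of_le_one_right N.cast_nonneg hp.2)
  rw [lqv_eq_sort_of_ceil hN v ⟨⌈(N : ℝ) * p⌉₊ - 1, by omega⟩ (Nat.sub_add_cancel hr₁), dosv]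
  gcongr
  convert (card_filter_min_sort_lt_lt_max_sort_le v k _).trans _
  simp only
  omega

end OrderStatistics

theorem coarsening_algorithm_unequal_partitions (m d : ℕ)
    (hd : 0 < d) (c : Fin m → ℕ) (hc : ∀ i, 2 ≤ c i)
    (N : ℕ) (hN : N = ∑ i, c i * d) (hN0 : 0 < N)
    (e : (Σ i : Fin m, Fin (c i * d)) ≃ Fin N)
    (x : Fin N → ℝ)
    (W : ℕ) (hW : W = ∑ i, (c i - 1)) (hW0 : 0 < W)
    (f : (Σ i : Fin m, Fin (c i - 1)) ≃ Fin W)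
    (w : Fin W → ℝ)
    (hw : ∀ (i : Fin m) (t : Fin (c i - 1)),
      w (f ⟨i, t⟩) =
        lqv (Nat.mul_pos (by have := hc i; omega) hd : 0 < c i * d)
          (fun j : Fin (c i * d) => x (e ⟨i, j⟩))
          (((t : ℕ) + 1 : ℝ) / (c i : ℝ)))
    (p : ℝ) (hp : p ∈ Set.Ioc (0 : ℝ) 1) :
    (∃ p' : ℝ, |p' - p| ≤ ((m : ℝ) + 1) / ((∑ i, (c i : ℝ)) - m) ∧
      lqv hW0 w p = lqv hN0 x p') ∧
    dosv x (lqv hW0 w p) (lqv hN0 x p) ≤ ((m : ℝ) + 1) / ((∑ i, (c i : ℝ)) - m) := by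
  have hstack : IsStackedCoarsening hd e f x w := fun i t =>
    (hw i t).trans (lqv_succ_div_eq_coarsening _ hd _ t)
  have hcW : ∑ i, c i = W + m :=
    calc ∑ i, c i = ∑ i, (c i - 1 + 1) := sum_congr rfl fun i _ => by have := hc i; omega
      _ = W + m := by rw [sum_add_distrib, hW]; simp
  have hNW : N = (W + Fintype.card (Fin m)) * d := by rw [hN, ← sum_mul, hcW, Fintype.card_fin]
  have hsum : (∑ i, (c i : ℝ)) - m = W := by
    rw [← Nat.cast_sum, hcW, Nat.cast_add, add_sub_cancel_right]
  obtain ⟨k, hkμ, hk₁, hk₂⟩ := hstack.exists_sort_eq_lqv hNW hW0 hp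
  rw [Fintype.card_fin] at hk₁ hk₂
  obtain ⟨p', hp', hkp'⟩ := exists_abs_sub_le_sort_eq_lqv hN0 x k hk₁ hk₂ hp.1.le
  have hbound : ((d * m : ℕ) + 1 : ℝ) / N ≤ (m + 1) / W := by
    have hd' : (1 : ℝ) ≤ d := by exact_mod_cast hd
    rw [div_le_div_iff₀ (by exact_mod_cast hN0) (by exact_mod_cast hW0), hNW, Fintype.card_fin]
    push_cast
    have hm : (0 : ℝ) ≤ m := m.cast_nonneg
    nlinarith [mul_nonneg (mul_nonneg hm hm) (zero_le_one.trans hd'), W.cast_nonneg (α := ℝ)]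
  rw [hsum, ← hkμ]
  exact ⟨⟨p', hp'.trans hbound, hkp'⟩, (dosv_sort_lqv_le hN0 x k hk₁ hk₂ hp).trans <|
    (div_le_div_of_nonneg_right (by linarith) (Nat.cast_nonneg N)).trans hbound⟩
end
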